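/- arXiv:2009.07654 — 3 statements merged into one kernel-verified Lean document; each statement's English description precedes it below -/
import Mathlib

section
/- Let Λ be a graph and x a vertex of Λ. The right-angled Coxeter group W_{Λ'}, where Λ' is obtained by doubling Λ along the star of x and then deleting x, embeds as an index-2 subgroup of W_Λ (namely the kernel of the map W_Λ → Z/2 sending x ↦ 1 and all other generators ↦ 0). -/
/-- The set of relators of the right-angled Coxeter group of a graph: squares of the
generators, and squares of products of adjacent generators. -/
def racgRels {V : Type*} (G : SimpleGraph V) : Set (FreeGroup V) :=
  {r | (∃ v, r = FreeGroup.of v * FreeGroup.of v) ∨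
       (∃ a b, G.Adj a b ∧ r = (FreeGroup.of a * FreeGroup.of b) ^ 2)}

/-- The right-angled Coxeter group of a graph. -/
abbrev RACG {V : Type*} (G : SimpleGraph V) := PresentedGroup (racgRels G)

/-- The standard generator of a right-angled Coxeter group corresponding to a vertex. -/
noncomputable def racgGen {V : Type*} (G : SimpleGraph V) (v : V) : RACG G :=
  PresentedGroup.of v
/-- Vertices of the double of `G` along the star of `x`, with `x` deleted: a first copy
containing everything except `x` (this includes the shared star of `x`), and a second
copy of the vertices outside the closed star of `x`. -/
def DoubleVert {V : Type*} (G : SimpleGraph V) (x : V) : Type _ :=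
  {v : V // v ≠ x} ⊕ {v : V // ¬(v = x ∨ G.Adj x v)}

/-- The double of `G` along the star of the vertex `x`, with `x` deleted. -/
def doubleMinusStar {V : Type*} (G : SimpleGraph V) (x : V) :
    SimpleGraph (DoubleVert G x) :=
  SimpleGraph.fromRel (fun a b =>
    match a, b with
    | Sum.inl a, Sum.inl b => G.Adj a.1 b.1
    | Sum.inl a, Sum.inr b => G.Adj a.1 b.1 ∧ G.Adj x a.1
    | Sum.inr a, Sum.inl b => G.Adj a.1 b.1 ∧ G.Adj x b.1
    | Sum.inr a, Sum.inr b => G.Adj a.1 b.1)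

/-
The map `W_Λ → ℤ/2` splits via `1 ↦ x`, and `W_Λ ≅ W_Λ' ⋊ ℤ/2`, where `ℤ/2` acts on `W_Λ'`
through the automorphism of `Λ'` exchanging the two copies of `Λ` (it fixes the shared star of
`x`). Mutually inverse homomorphisms are `v ↦ v` (`v ≠ x`), `x ↦ t` in one direction, and
`v ↦ v` on the first copy, `v ↦ x v x` on the second copy, `t ↦ x` in the other; checking the
defining relations on generators is where the star condition enters. The kernel of the
projection of the semidirect product onto `ℤ/2` is `W_Λ'`.
-/

open Multiplicative

namespace RACG

variable {V W M : Type*} [Group M] {H : SimpleGraph V} {H' : SimpleGraph W}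

theorem gen_mul_self (v : V) : racgGen H v * racgGen H v = 1 :=
  (QuotientGroup.eq_one_iff _).2 (Subgroup.subset_normalClosure (Or.inl ⟨v, rfl⟩))

@[simp]
theorem gen_inv (v : V) : (racgGen H v)⁻¹ = racgGen H v :=
  inv_eq_of_mul_eq_one_right (gen_mul_self v)

theorem gen_commute {a b : V} (h : H.Adj a b) : Commute (racgGen H a) (racgGen H b) := by
  have hsq : (racgGen H a * racgGen H b) ^ 2 = 1 :=
    (QuotientGroup.eq_one_iff _).2 (Subgroup.subset_normalClosure (Or.inr ⟨a, b, h, rfl⟩))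
  have hinv : racgGen H a * racgGen H b = (racgGen H a * racgGen H b)⁻¹ :=
    eq_inv_of_mul_eq_one_left (by rwa [← sq])
  rw [Commute, SemiconjBy, hinv, mul_inv_rev, gen_inv, gen_inv]

noncomputable def lift (g : V → M) (hsq : ∀ v, g v * g v = 1)
    (hcomm : ∀ a b, H.Adj a b → Commute (g a) (g b)) : RACG H →* M :=
  PresentedGroup.toGroup (rels := racgRels H) (f := g) <| by
    rintro r (⟨v, rfl⟩ | ⟨a, b, hab, rfl⟩)
    · simp [hsq v]
    · simp only [map_mul, FreeGroup.lift_apply_of, sq]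
      rw [(hcomm a b hab).symm.mul_mul_mul_comm, hsq, hsq, one_mul]

@[simp]
theorem lift_gen (g : V → M) (hsq) (hcomm) (v : V) :
    lift (H := H) g hsq hcomm (racgGen H v) = g v :=
  PresentedGroup.toGroup.of _

theorem hom_ext {f₁ f₂ : RACG H →* M} (h : ∀ v, f₁ (racgGen H v) = f₂ (racgGen H v)) :
    f₁ = f₂ :=
  PresentedGroup.ext h

noncomputable def map (φ : H →g H') : RACG H →* RACG H' :=
  lift (racgGen H' ∘ φ) (fun _ => gen_mul_self _) (fun _ _ h => gen_commute (φ.map_adj h))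

@[simp]
theorem map_gen (φ : H →g H') (v : V) : map φ (racgGen H v) = racgGen H' (φ v) :=
  lift_gen _ _ _ _

theorem map_comp_map_symm (e : H ≃g H') : (map e.toHom).comp (map e.symm.toHom) = .id _ :=
  hom_ext fun v => by simp

noncomputable def congr (e : H ≃g H') : RACG H ≃* RACG H' :=
  MonoidHom.toMulEquiv (map e.toHom) (map e.symm.toHom)
    (by simpa using map_comp_map_symm e.symm) (map_comp_map_symm e)

@[simp]
theorem congr_gen (e : H ≃g H') (v : V) : congr e (racgGen H v) = racgGen H' (e v) :=
  map_gen _ _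

theorem congr_mul_self {e : H ≃g H} (he : Function.Involutive e) : congr e * congr e = 1 :=
  MulEquiv.toMonoidHom_injective <| hom_ext fun v => by simp [he v]

end RACG

theorem Multiplicative.zmodTwo_eq_one_or_eq_ofAdd_one (c : Multiplicative (ZMod 2)) :
    c = 1 ∨ c = ofAdd 1 := by
  revert c; decide

theorem MonoidHom.ext_zmodTwo {M : Type*} [Monoid M] {f g : Multiplicative (ZMod 2) →* M}
    (h : f (ofAdd 1) = g (ofAdd 1)) : f = g := by
  refine MonoidHom.ext fun c => ?_
  rcases Multiplicative.zmodTwo_eq_one_or_eq_ofAdd_one c with rfl | rfl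
  · simp only [map_one]
  · exact h

noncomputable def zmodTwoHom {M : Type*} [Group M] (g : M) (hg : g * g = 1) :
    Multiplicative (ZMod 2) →* M :=
  AddMonoidHom.toMultiplicativeLeft <| ZMod.lift 2
    ⟨zmultiplesHom (Additive M) (Additive.ofMul g), by
      simpa [two_zsmul] using congrArg Additive.ofMul hg⟩

@[simp]
theorem zmodTwoHom_ofAdd_one {M : Type*} [Group M] (g : M) (hg : g * g = 1) :
    zmodTwoHom g hg (ofAdd 1) = g := by
  simp [zmodTwoHom, ← Int.cast_one (R := ZMod 2), -Int.cast_one]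

theorem SemidirectProduct.commute_inr_inl {N G : Type*} [Group N] [Group G]
    {φ : G →* MulAut N} {g : G} {n : N} (h : φ g n = n) : Commute (inr g : N ⋊[φ] G) (inl n) :=
  mul_inv_eq_iff_eq_mul.1 (by rw [← map_inv, ← inl_aut, h])

def SimpleGraph.Iso.ofInvolutive {V : Type*} {G : SimpleGraph V} (f : V → V)
    (hf : Function.Involutive f) (hadj : ∀ {a b}, G.Adj a b → G.Adj (f a) (f b)) : G ≃g G where
  toEquiv := hf.toPerm f
  map_rel_iff' :=
    ⟨fun h => by simpa only [Function.Involutive.coe_toPerm, hf _] using hadj h, hadj⟩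

@[simp]
theorem SimpleGraph.Iso.ofInvolutive_apply {V : Type*} {G : SimpleGraph V} (f : V → V)
    (hf : Function.Involutive f) (hadj : ∀ {a b}, G.Adj a b → G.Adj (f a) (f b)) (v : V) :
    SimpleGraph.Iso.ofInvolutive f hf hadj v = f v := rfl

noncomputable def SemidirectProduct.mulEquivKerRightHom {N G : Type*} [Group N] [Group G]
    {φ : G →* MulAut N} : N ≃* (rightHom : N ⋊[φ] G →* G).ker :=
  (MonoidHom.ofInjective inl_injective).trans (MulEquiv.subgroupCongr range_inl_eq_ker_rightHom)

def MonoidHom.kerMulEquivKerComp {G N P : Type*} [Group G] [Group N] [Group P] (g : N →* P)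
    (e : G ≃* N) : g.ker ≃* (g.comp e.toMonoidHom).ker :=
  (e.symm.subgroupMap g.ker).trans (MulEquiv.subgroupCongr (g.ker_comp_mulEquiv e).symm)

theorem MonoidHom.index_ker_of_surjective {G H : Type*} [Group G] [Group H] {f : G →* H}
    (hf : Function.Surjective f) : f.ker.index = Nat.card H := by
  rw [Subgroup.index_ker, MonoidHom.range_eq_top.2 hf, Subgroup.card_top]

namespace DoubleVert

variable {V : Type*} {G : SimpleGraph V} {x : V}

/- The two copies are given named inclusions so that their values have type `DoubleVert G x`
rather than the underlying sum type; otherwise `rw` and `simp` fail to instantiate lemmas about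
`racgGen (doubleMinusStar G x)` at them. -/
def first (a : {v : V // v ≠ x}) : DoubleVert G x := Sum.inl a

def second (a : {v : V // ¬(v = x ∨ G.Adj x v)}) : DoubleVert G x := Sum.inr a

@[elab_as_elim, induction_eliminator]
def cases {motive : DoubleVert G x → Sort*} (first : ∀ a, motive (first a))
    (second : ∀ a, motive (second a)) : ∀ v, motive v
  | Sum.inl a => first a
  | Sum.inr a => second a

@[simp]
theorem adj_first_first {a b : {v : V // v ≠ x}} :
    (doubleMinusStar G x).Adj (first a) (first b) ↔ G.Adj a b :=
  (SimpleGraph.fromRel_adj _ _ _).trans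
    ⟨fun h => h.2.elim id .symm,
      fun h => ⟨fun he => h.ne (congrArg Subtype.val (Sum.inl.inj he)), .inl h⟩⟩

@[simp]
theorem adj_first_second {a : {v : V // v ≠ x}} {b : {v : V // ¬(v = x ∨ G.Adj x v)}} :
    (doubleMinusStar G x).Adj (first a) (second b) ↔ G.Adj a b ∧ G.Adj x a :=
  (SimpleGraph.fromRel_adj _ _ _).trans
    ⟨fun h => h.2.elim id fun h' => ⟨h'.1.symm, h'.2⟩, fun h => ⟨Sum.inl_ne_inr, .inl h⟩⟩

@[simp]
theorem adj_second_first {a : {v : V // ¬(v = x ∨ G.Adj x v)}} {b : {v : V // v ≠ x}} :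
    (doubleMinusStar G x).Adj (second a) (first b) ↔ G.Adj a b ∧ G.Adj x b :=
  (SimpleGraph.fromRel_adj _ _ _).trans
    ⟨fun h => h.2.elim id fun h' => ⟨h'.1.symm, h'.2⟩, fun h => ⟨Sum.inr_ne_inl, .inl h⟩⟩

@[simp]
theorem adj_second_second {a b : {v : V // ¬(v = x ∨ G.Adj x v)}} :
    (doubleMinusStar G x).Adj (second a) (second b) ↔ G.Adj a b :=
  (SimpleGraph.fromRel_adj _ _ _).trans
    ⟨fun h => h.2.elim id .symm,
      fun h => ⟨fun he => h.ne (congrArg Subtype.val (Sum.inr.inj he)), .inl h⟩⟩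

open Classical in
noncomputable def swap : DoubleVert G x → DoubleVert G x
  | Sum.inl a => if h : G.Adj x a then first a else second ⟨a.1, not_or.2 ⟨a.2, h⟩⟩
  | Sum.inr a => first ⟨a.1, (not_or.1 a.2).1⟩

theorem swap_first_of_adj {a : {v : V // v ≠ x}} (h : G.Adj x a) :
    swap (first a : DoubleVert G x) = first a :=
  dif_pos h

theorem swap_first_of_not_adj {a : {v : V // v ≠ x}} (h : ¬G.Adj x a) :
    swap (first a : DoubleVert G x) = second ⟨a.1, not_or.2 ⟨a.2, h⟩⟩ :=
  dif_neg h

theorem swap_second (a : {v : V // ¬(v = x ∨ G.Adj x v)}) :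
    swap (second a) = first ⟨a.1, (not_or.1 a.2).1⟩ :=
  rfl

theorem swap_involutive : Function.Involutive (swap (G := G) (x := x)) := by
  intro v
  induction v with
  | first a =>
    by_cases h : G.Adj x a
    · rw [swap_first_of_adj h, swap_first_of_adj h]
    · rw [swap_first_of_not_adj h, swap_second]
  | second a => rw [swap_second, swap_first_of_not_adj (not_or.1 a.2).2]

theorem swap_adj {a b : DoubleVert G x} (h : (doubleMinusStar G x).Adj a b) :
    (doubleMinusStar G x).Adj (swap a) (swap b) := by
  induction a with
  | first a =>
    induction b with
    | first b =>
      by_cases ha : G.Adj x a <;> by_cases hb : G.Adj x b <;>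
        simp_all [swap_first_of_adj, swap_first_of_not_adj]
    | second b => simp_all [swap_first_of_adj, swap_second]
  | second a =>
    induction b with
    | first b => simp_all [swap_first_of_adj, swap_second]
    | second b => simp_all [swap_second]

end DoubleVert

section Semidirect

open DoubleVert SemidirectProduct

variable {V : Type*} (G : SimpleGraph V) (x : V)

noncomputable def DoubleVert.swapIso : doubleMinusStar G x ≃g doubleMinusStar G x :=
  .ofInvolutive swap swap_involutive swap_adj

noncomputable def swapAction : Multiplicative (ZMod 2) →* MulAut (RACG (doubleMinusStar G x)) :=
  zmodTwoHom (RACG.congr (swapIso G x)) (RACG.congr_mul_self swap_involutive)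

@[simp]
theorem swapAction_ofAdd_one_gen (a : DoubleVert G x) :
    swapAction G x (ofAdd 1) (racgGen _ a) = racgGen _ (swap a) := by
  simp [swapAction, swapIso]

open Classical in
noncomputable def toSemidirectGen (v : V) :
    RACG (doubleMinusStar G x) ⋊[swapAction G x] Multiplicative (ZMod 2) :=
  if h : v = x then inr (ofAdd 1) else inl (racgGen _ (first ⟨v, h⟩))

theorem toSemidirectGen_self : toSemidirectGen G x x = inr (ofAdd 1) := dif_pos rfl

theorem toSemidirectGen_of_ne {v : V} (h : v ≠ x) :
    toSemidirectGen G x v = inl (racgGen _ (first ⟨v, h⟩)) := dif_neg h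

theorem toSemidirectGen_mul_self (v : V) :
    toSemidirectGen G x v * toSemidirectGen G x v = 1 := by
  by_cases h : v = x
  · rw [h, toSemidirectGen_self, ← map_mul, ← ofAdd_add, CharTwo.add_self_eq_zero, ofAdd_zero,
      map_one]
  · rw [toSemidirectGen_of_ne G x h, ← map_mul, RACG.gen_mul_self, map_one]

theorem toSemidirectGen_commute {a b : V} (hab : G.Adj a b) :
    Commute (toSemidirectGen G x a) (toSemidirectGen G x b) := by
  have commute_of_adj {v : V} (hv : G.Adj x v) :
      Commute (toSemidirectGen G x x) (toSemidirectGen G x v) := by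
    rw [toSemidirectGen_self, toSemidirectGen_of_ne G x hv.ne']
    exact commute_inr_inl (by rw [swapAction_ofAdd_one_gen, swap_first_of_adj hv])
  by_cases ha : a = x
  · subst ha; exact commute_of_adj hab
  by_cases hb : b = x
  · subst hb; exact (commute_of_adj hab.symm).symm
  rw [toSemidirectGen_of_ne G x ha, toSemidirectGen_of_ne G x hb]
  exact (RACG.gen_commute (adj_first_first.2 hab)).map inl

noncomputable def toSemidirect :
    RACG G →* RACG (doubleMinusStar G x) ⋊[swapAction G x] Multiplicative (ZMod 2) :=
  RACG.lift (toSemidirectGen G x) (toSemidirectGen_mul_self G x)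
    (fun _ _ => toSemidirectGen_commute G x)

@[simp]
theorem toSemidirect_gen (v : V) : toSemidirect G x (racgGen G v) = toSemidirectGen G x v :=
  RACG.lift_gen _ _ _ _

noncomputable def ofDoubleGen : DoubleVert G x → RACG G :=
  cases (fun a => racgGen G a) (fun a => MulAut.conj (racgGen G x) (racgGen G a))

@[simp]
theorem ofDoubleGen_first (a : {v : V // v ≠ x}) :
    ofDoubleGen G x (first a) = racgGen G a :=
  rfl

@[simp]
theorem ofDoubleGen_second (a : {v : V // ¬(v = x ∨ G.Adj x v)}) :
    ofDoubleGen G x (second a) = MulAut.conj (racgGen G x) (racgGen G a) := rfl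

theorem ofDoubleGen_mul_self (a : DoubleVert G x) :
    ofDoubleGen G x a * ofDoubleGen G x a = 1 := by
  induction a with
  | first a => exact RACG.gen_mul_self _
  | second a => rw [ofDoubleGen_second, ← map_mul, RACG.gen_mul_self, map_one]

theorem ofDoubleGen_commute {a b : DoubleVert G x} (h : (doubleMinusStar G x).Adj a b) :
    Commute (ofDoubleGen G x a) (ofDoubleGen G x b) := by
  have mixed {a : {v : V // v ≠ x}} {b : {v : V // ¬(v = x ∨ G.Adj x v)}}
      (h : G.Adj a b ∧ G.Adj x a) :
      Commute (ofDoubleGen G x (first a)) (ofDoubleGen G x (second b)) := by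
    have hax := (RACG.gen_commute h.2).symm
    simpa using (hax.mul_right (RACG.gen_commute h.1)).mul_right hax.inv_right
  induction a with
  | first a =>
    induction b with
    | first b => exact RACG.gen_commute (adj_first_first.1 h)
    | second b => exact mixed (adj_first_second.1 h)
  | second a =>
    induction b with
    | first b =>
      obtain ⟨hab, hxb⟩ := adj_second_first.1 h
      exact (mixed ⟨hab.symm, hxb⟩).symm
    | second b => exact (RACG.gen_commute (adj_second_second.1 h)).map _

noncomputable def ofDouble : RACG (doubleMinusStar G x) →* RACG G :=
  RACG.lift (ofDoubleGen G x) (ofDoubleGen_mul_self G x) (fun _ _ => ofDoubleGen_commute G x)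

@[simp]
theorem ofDouble_gen (a : DoubleVert G x) : ofDouble G x (racgGen _ a) = ofDoubleGen G x a :=
  RACG.lift_gen _ _ _ _

theorem ofDouble_comp_swapAction (c : Multiplicative (ZMod 2)) :
    (ofDouble G x).comp (swapAction G x c).toMonoidHom =
      (MulAut.conj (zmodTwoHom (racgGen G x) (RACG.gen_mul_self x) c)).toMonoidHom.comp
        (ofDouble G x) := by
  rcases Multiplicative.zmodTwo_eq_one_or_eq_ofAdd_one c with rfl | rfl
  · exact MonoidHom.ext fun _ => by simp
  refine RACG.hom_ext fun a => ?_
  induction a with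
  | first a =>
    by_cases h : G.Adj x a
    · simpa [swap_first_of_adj h] using (RACG.gen_commute h).mul_inv_cancel.symm
    · simp [swap_first_of_not_adj h]
  | second a =>
    simp only [MonoidHom.comp_apply, MulEquiv.coe_toMonoidHom, swapAction_ofAdd_one_gen,
      swap_second, ofDouble_gen, ofDoubleGen_first, ofDoubleGen_second, zmodTwoHom_ofAdd_one]
    rw [← MulAut.mul_apply, ← map_mul, RACG.gen_mul_self, map_one, MulAut.one_apply]

noncomputable def ofSemidirect :
    RACG (doubleMinusStar G x) ⋊[swapAction G x] Multiplicative (ZMod 2) →* RACG G :=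
  lift (ofDouble G x) (zmodTwoHom (racgGen G x) (RACG.gen_mul_self x))
    (ofDouble_comp_swapAction G x)

theorem ofSemidirect_comp_toSemidirect : (ofSemidirect G x).comp (toSemidirect G x) = .id _ := by
  refine RACG.hom_ext fun v => ?_
  by_cases h : v = x
  · subst h; simp [toSemidirectGen_self, ofSemidirect]
  · simp [toSemidirectGen_of_ne G x h, ofSemidirect]

theorem toSemidirect_comp_ofSemidirect : (toSemidirect G x).comp (ofSemidirect G x) = .id _ := by
  refine hom_ext (RACG.hom_ext fun a => ?_) (MonoidHom.ext_zmodTwo ?_)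
  · induction a with
    | first a => simp [ofSemidirect, toSemidirectGen_of_ne G x a.2]
    | second a =>
      -- `x v x ↦ t v t = σ v`, and `σ` sends the first copy of `v ∉ star x` to its second copy.
      have ha := not_or.1 a.2
      simp only [MonoidHom.comp_apply, MonoidHom.id_apply, ofSemidirect, lift_inl, ofDouble_gen,
        ofDoubleGen_second]
      rw [MulAut.conj_apply, map_mul, map_mul, map_inv, toSemidirect_gen, toSemidirect_gen,
        toSemidirectGen_self, toSemidirectGen_of_ne G x ha.1, ← map_inv, ← inl_aut,
        swapAction_ofAdd_one_gen, swap_first_of_not_adj ha.2]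
  · simp [ofSemidirect, toSemidirectGen_self]

noncomputable def semidirectEquiv :
    RACG G ≃* RACG (doubleMinusStar G x) ⋊[swapAction G x] Multiplicative (ZMod 2) :=
  (toSemidirect G x).toMulEquiv (ofSemidirect G x) (ofSemidirect_comp_toSemidirect G x)
    (toSemidirect_comp_ofSemidirect G x)

end Semidirect

theorem racg_doubleMinusStar_index_two_kernel_general
    {V : Type} (G : SimpleGraph V) (x : V) :
    ∃ f : RACG G →* Multiplicative (ZMod 2),
      f (racgGen G x) = Multiplicative.ofAdd (1 : ZMod 2) ∧
      (∀ v : V, v ≠ x → f (racgGen G v) = 1) ∧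
      Function.Surjective f ∧
      f.ker.index = 2 ∧
      Nonempty (RACG (doubleMinusStar G x) ≃* f.ker) := by
  let e := semidirectEquiv G x
  have hsurj : Function.Surjective (SemidirectProduct.rightHom.comp e.toMonoidHom) :=
    SemidirectProduct.rightHom_surjective.comp e.surjective
  refine ⟨_, ?_, fun v hv => ?_, hsurj, ?_,
    ⟨SemidirectProduct.mulEquivKerRightHom.trans (MonoidHom.kerMulEquivKerComp _ e)⟩⟩
  · simp [e, semidirectEquiv, toSemidirectGen_self]
  · simp [e, semidirectEquiv, toSemidirectGen_of_ne G x hv]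
  · rw [MonoidHom.index_ker_of_surjective hsurj, Nat.card_congr toAdd, Nat.card_zmod]

/-- For any graph `Λ` with a vertex `x`, the right-angled Coxeter group of
the graph `Λ'` obtained by doubling `Λ` along the star of `x` and deleting `x` embeds as an
index-2 subgroup of `W_Λ`, namely as the kernel of the homomorphism `W_Λ → ℤ/2` sending the
generator `x` to `1` and all other generators to `0`. -/
theorem racg_doubleMinusStar_index_two_kernel
    {V : Type} [Fintype V] [DecidableEq V] (G : SimpleGraph V) (x : V) :
    ∃ f : RACG G →* Multiplicative (ZMod 2),
      f (racgGen G x) = Multiplicative.ofAdd (1 : ZMod 2) ∧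
      (∀ v : V, v ≠ x → f (racgGen G v) = 1) ∧
      Function.Surjective f ∧
      f.ker.index = 2 ∧
      Nonempty (RACG (doubleMinusStar G x) ≃* f.ker) :=
  racg_doubleMinusStar_index_two_kernel_general G x
end

section
/- In the graph Λ' obtained by doubling the graph Λ of Figure 1 along the star of x and deleting x, the cycle formed by the two copies of the outer path of Λ avoiding the star of x is an induced cycle of length at least 5 that is not burst. -/
/-- A closed walk is an induced (chordless) cycle if it is a cycle and the only
adjacencies among its vertices are the edges of the walk itself. -/
def IsInducedCycle {V : Type*} (G : SimpleGraph V) {v : V} (w : G.Walk v v) : Prop :=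
  w.IsCycle ∧ ∀ a b, a ∈ w.support → b ∈ w.support → G.Adj a b → w.toSubgraph.Adj a b

/-- An induced cycle is burst if it contains two distinct non-adjacent vertices that
both lie on some induced 4-cycle of the ambient graph. -/
def IsBurst {V : Type*} (G : SimpleGraph V) {v : V} (w : G.Walk v v) : Prop :=
  ∃ a b, a ∈ w.support ∧ b ∈ w.support ∧ a ≠ b ∧ ¬G.Adj a b ∧
    ∃ (c : V) (w4 : G.Walk c c), IsInducedCycle G w4 ∧ w4.length = 4 ∧
      a ∈ w4.support ∧ b ∈ w4.support
/-- Edge list of the graph `Λ` (our encoding of the graph of Figure 1): vertex `0` is the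
distinguished vertex `x`; `1,2` are the shared connectors `s,t`; `3,4` and `5,6` are the two
outer paths avoiding the star of `x`; `7,8,9,10,11` are the vertices creating the
bursting squares. -/
def lamEdges : List (ℕ × ℕ) :=
  [(0,1),(0,2),(0,8),(0,9),(0,10),(0,11),(1,3),(1,5),(2,4),(2,6),(3,4),(5,6),
   (3,7),(5,7),(4,8),(4,9),(6,10),(6,11)]

/-- The graph `Λ` of Figure 1 (our concrete encoding). -/
def lam : SimpleGraph (Fin 12) :=
  SimpleGraph.fromRel (fun a b => (a.1, b.1) ∈ lamEdges)

instance : DecidableRel lam.Adj := fun a b =>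
  decidable_of_iff (a ≠ b ∧ ((a.1, b.1) ∈ lamEdges ∨ (b.1, a.1) ∈ lamEdges))
    (by rw [lam, SimpleGraph.fromRel_adj])

/-- The distinguished vertex `x` of `Λ`. -/
def xΛ : Fin 12 := 0

/-- A first-copy vertex of the double of `Λ` along the star of `x`, minus `x`. -/
def vL (v : Fin 12) (h : v ≠ xΛ := by decide) : DoubleVert lam xΛ := Sum.inl ⟨v, h⟩

/-- A second-copy vertex of the double of `Λ` along the star of `x`, minus `x`. -/
def vR (v : Fin 12) (h : ¬(v = xΛ ∨ lam.Adj xΛ v) := by decide) : DoubleVert lam xΛ :=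
  Sum.inr ⟨v, h⟩


section Aux
open SimpleGraph

instance : DecidableEq (DoubleVert lam xΛ) := by
  unfold DoubleVert; infer_instance

instance : Fintype (DoubleVert lam xΛ) := by
  unfold DoubleVert; infer_instance

def dRel (a b : DoubleVert lam xΛ) : Prop :=
  match a, b with
  | Sum.inl a, Sum.inl b => lam.Adj a.1 b.1
  | Sum.inl a, Sum.inr b => lam.Adj a.1 b.1 ∧ lam.Adj xΛ a.1
  | Sum.inr a, Sum.inl b => lam.Adj a.1 b.1 ∧ lam.Adj xΛ b.1
  | Sum.inr a, Sum.inr b => lam.Adj a.1 b.1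

instance (a b : DoubleVert lam xΛ) : Decidable (dRel a b) := by
  cases a <;> cases b <;> unfold dRel <;> infer_instance

instance : DecidableRel (doubleMinusStar lam xΛ).Adj := fun a b =>
  decidable_of_iff (a ≠ b ∧ (dRel a b ∨ dRel b a))
    (by rw [doubleMinusStar, SimpleGraph.fromRel_adj]
        cases a <;> cases b <;> rfl)

def decToSubgraph {V : Type*} [DecidableEq V] {G : SimpleGraph V} :
    ∀ {u v : V} (p : G.Walk u v), DecidableRel p.toSubgraph.Adj
  | _, _, SimpleGraph.Walk.nil => fun a b =>
      decidable_of_iff False (by simp)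
  | _, _, @SimpleGraph.Walk.cons _ _ u' v' w' h p => fun a b =>
      have : DecidableRel p.toSubgraph.Adj := decToSubgraph p
      decidable_of_iff (s(u', v') = s(a, b) ∨ p.toSubgraph.Adj a b)
        (by simp [SimpleGraph.Walk.toSubgraph])

instance {u v : DoubleVert lam xΛ} (p : (doubleMinusStar lam xΛ).Walk u v) :
    DecidableRel p.toSubgraph.Adj := decToSubgraph p

def myWalk : (doubleMinusStar lam xΛ).Walk (vL 1) (vL 1) :=
  .cons (v := vL 3) (by decide) (.cons (v := vL 4) (by decide)
    (.cons (v := vL 2) (by decide) (.cons (v := vR 6) (by decide)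
      (.cons (v := vR 5) (by decide) (.cons (v := vL 1) (by decide) .nil)))))

lemma myWalk_isCycle : myWalk.IsCycle := by
  rw [SimpleGraph.Walk.isCycle_def, SimpleGraph.Walk.isTrail_def]
  refine ⟨by decide, by simp [myWalk], by decide⟩

lemma four_cycle_common {V : Type*} {G : SimpleGraph V} {c : V} {w4 : G.Walk c c}
    (hc : w4.IsCycle) (hl : w4.length = 4) {a b : V}
    (ha : a ∈ w4.support) (hb : b ∈ w4.support) (hab : a ≠ b) (hnadj : ¬G.Adj a b) :
    ∃ p q, p ≠ q ∧ G.Adj a p ∧ G.Adj b p ∧ G.Adj a q ∧ G.Adj b q := by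
  cases w4 with
  | nil => simp at hl
  | cons h1 p1 =>
  cases p1 with
  | nil => simp at hl
  | cons h2 p2 =>
  cases p2 with
  | nil => simp at hl
  | cons h3 p3 =>
  cases p3 with
  | nil => simp at hl
  | cons h4 p4 =>
  cases p4 with
  | cons h5 p5 => simp [SimpleGraph.Walk.length_cons] at hl
  | nil =>
    rw [SimpleGraph.Walk.isCycle_def] at hc
    have hnd := hc.2.2
    simp [SimpleGraph.Walk.support, List.nodup_cons] at hnd ha hb
    rcases ha with rfl | rfl | rfl | rfl | rfl <;> rcases hb with rfl | rfl | rfl | rfl | rfl <;>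
      first
      | exact absurd rfl hab
      | exact absurd (by assumption) hnadj
      | exact absurd (SimpleGraph.Adj.symm (by assumption)) hnadj
      | exact ⟨_, _, by tauto, h1, h2.symm, h4.symm, h3⟩
      | exact ⟨_, _, by tauto, h2.symm, h1, h3, h4.symm⟩
      | exact ⟨_, _, by tauto, h2, h3.symm, h1.symm, h4⟩
      | exact ⟨_, _, by tauto, h3.symm, h2, h4, h1.symm⟩

lemma no_common_pair : ∀ a b : DoubleVert lam xΛ,
    a ∈ myWalk.support → b ∈ myWalk.support → a ≠ b →
      ¬(doubleMinusStar lam xΛ).Adj a b →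
    ∀ p q : DoubleVert lam xΛ,
      (doubleMinusStar lam xΛ).Adj a p → (doubleMinusStar lam xΛ).Adj b p →
      (doubleMinusStar lam xΛ).Adj a q → (doubleMinusStar lam xΛ).Adj b q → p = q := by
  decide

end Aux

/-- In the graph `Λ'` obtained by doubling `Λ` along the star of `x` and
deleting `x`, the cycle formed by the two copies of the outer paths of `Λ` avoiding the star
of `x` (joined along the shared connectors `1` and `2`) is an induced cycle of length at
least 5 that is not burst. -/
theorem doubled_outer_path_cycle_not_burst :
    ∃ w : (doubleMinusStar lam xΛ).Walk (vL 1) (vL 1),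
      IsInducedCycle (doubleMinusStar lam xΛ) w ∧
      5 ≤ w.length ∧
      {a | a ∈ w.support} =
        ({vL 1, vL 3, vL 4, vL 2, vR 6, vR 5} : Set (DoubleVert lam xΛ)) ∧
      ¬ IsBurst (doubleMinusStar lam xΛ) w := by
  refine ⟨myWalk, ⟨myWalk_isCycle, by decide⟩, by decide, ?_, ?_⟩
  · ext a
    simp only [Set.mem_setOf_eq, Set.mem_insert_iff, Set.mem_singleton_iff]
    revert a; decide
  · rintro ⟨a, b, ha, hb, hab, hnadj, c, w4, ⟨hcyc, -⟩, hlen, ha4, hb4⟩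
    obtain ⟨p, q, hpq, h1, h2, h3, h4⟩ :=
      four_cycle_common hcyc hlen ha4 hb4 hab hnadj
    exact hpq (no_common_pair a b ha hb hab hnadj p q h1 h2 h3 h4)
end

section
/- Let Γ be a graph and let Γ' be the double of Γ along the star of a vertex x, with x deleted. If C is an induced cycle in Γ avoiding the star of x, then the image of C in each copy of Γ inside Γ' is an induced cycle in Γ', and any induced 4-cycle of Γ' containing two vertices of that image lies entirely inside that copy of Γ (together possibly with vertices of the common star boundary). -/
namespace SimpleGraph

variable {V W : Type*} {G : SimpleGraph V} {G' : SimpleGraph W}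

theorem Walk.adj_or_adj_of_length_eq_four {d : V} (p : G.Walk d d) (hp : p.length = 4)
    {b b₁ b₂ : V} (hb : b ∈ p.support) (hb₁ : b₁ ∈ p.support) (hb₂ : b₂ ∈ p.support)
    (h₁₂ : b₁ ≠ b₂) (hbb₁ : b ≠ b₁) (hbb₂ : b ≠ b₂) : G.Adj b b₁ ∨ G.Adj b b₂ := by
  match p, hp with
  | .cons h₁ (.cons h₂ (.cons h₃ (.cons h₄ .nil))), _ =>
    simp only [support_cons, support_nil, List.mem_cons, List.not_mem_nil, or_false]
      at hb hb₁ hb₂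
    have := h₁.symm
    have := h₂.symm
    have := h₃.symm
    have := h₄.symm
    rcases hb with rfl | rfl | rfl | rfl | rfl <;>
      rcases hb₁ with rfl | rfl | rfl | rfl | rfl <;>
      rcases hb₂ with rfl | rfl | rfl | rfl | rfl <;>
      simp_all

theorem Walk.mem_support_map_induce {s : Set V} (f : G.induce s →g G') {u v : V}
    (w : G.Walk u v) (hw : ∀ a ∈ w.support, a ∈ s) {b : W} :
    b ∈ ((w.induce s hw).map f).support ↔
      ∃ (a : V) (h : a ∈ s), a ∈ w.support ∧ b = f ⟨a, h⟩ := by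
  simp only [support_map, support_induce, List.mem_map, List.mem_attachWith, Subtype.exists]
  exact ⟨fun ⟨a, h, ha, hb⟩ => ⟨a, h, ha, hb.symm⟩, fun ⟨a, h, ha, hb⟩ => ⟨a, h, ha, hb.symm⟩⟩

end SimpleGraph

section InducedCycle

open SimpleGraph

variable {V W : Type*} {G : SimpleGraph V} {G' : SimpleGraph W}

theorem isInducedCycle_map_iff (f : G ↪g G') {v : V} {p : G.Walk v v} :
    IsInducedCycle G' (p.map f.toHom) ↔ IsInducedCycle G p := by
  have hf : Function.Injective f.toHom := f.injective
  simp only [IsInducedCycle, Walk.isCycle_map_iff_of_injective hf, Walk.support_map,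
    Walk.toSubgraph_map, List.mem_map, forall_exists_index, and_imp]
  refine and_congr_right fun _ => ⟨fun h a b ha hb hab => ?_, ?_⟩
  · obtain ⟨a', b', hab', ha', hb'⟩ := h _ _ a ha rfl b hb rfl (f.map_adj_iff.2 hab)
    rwa [f.injective ha', f.injective hb'] at hab'
  · rintro h _ _ a ha rfl b hb rfl hab
    exact ⟨a, b, h a b ha hb (f.map_adj_iff.1 hab), rfl, rfl⟩

theorem IsInducedCycle.induce_map {s : Set V} (f : G.induce s ↪g G') {v : V} {p : G.Walk v v}
    (h : IsInducedCycle G p) (hp : ∀ a ∈ p.support, a ∈ s) :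
    IsInducedCycle G' ((p.induce s hp).map f.toHom) :=
  (isInducedCycle_map_iff f).2 <| (isInducedCycle_map_iff (Embedding.induce s)).1 <| by
    rwa [Walk.map_induce]

end InducedCycle

namespace doubleMinusStar

variable {V : Type*} {Γ : SimpleGraph V} {x : V}

theorem adj_inl_inl {a b : {v : V // v ≠ x}} :
    (doubleMinusStar Γ x).Adj (.inl a) (.inl b) ↔ Γ.Adj a b :=
  ⟨fun ⟨_, h⟩ => h.elim id fun h => h.symm,
    fun h => ⟨fun e => h.ne congr($(Sum.inl_injective e).1), .inl h⟩⟩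

theorem adj_inr_inr {a b : {v : V // ¬(v = x ∨ Γ.Adj x v)}} :
    (doubleMinusStar Γ x).Adj (.inr a) (.inr b) ↔ Γ.Adj a b :=
  ⟨fun ⟨_, h⟩ => h.elim id fun h => h.symm,
    fun h => ⟨fun e => h.ne congr($(Sum.inr_injective e).1), .inl h⟩⟩

theorem adj_inl_inr {a : {v : V // v ≠ x}} {b : {v : V // ¬(v = x ∨ Γ.Adj x v)}} :
    (doubleMinusStar Γ x).Adj (.inl a) (.inr b) ↔ Γ.Adj a b ∧ Γ.Adj x a :=
  ⟨fun ⟨_, h⟩ => h.elim id fun h => ⟨h.1.symm, h.2⟩, fun h => ⟨Sum.inl_ne_inr, .inl h⟩⟩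

variable (Γ x) in
def inlEmbedding : Γ.induce {v | v ≠ x} ↪g doubleMinusStar Γ x where
  toFun v := .inl v
  inj' := Sum.inl_injective
  map_rel_iff' := adj_inl_inl

variable (Γ x) in
def inrEmbedding : Γ.induce {v | ¬(v = x ∨ Γ.Adj x v)} ↪g doubleMinusStar Γ x where
  toFun v := .inr v
  inj' := Sum.inr_injective
  map_rel_iff' := adj_inr_inr

theorem exists_eq_inl_of_length_eq_four {d : DoubleVert Γ x}
    (p : (doubleMinusStar Γ x).Walk d d) (hp : p.length = 4) {a₁ a₂ : {v : V // v ≠ x}}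
    (h₁ : .inl a₁ ∈ p.support) (h₂ : .inl a₂ ∈ p.support) (h₁₂ : a₁ ≠ a₂)
    (ha₁ : ¬Γ.Adj x a₁) (ha₂ : ¬Γ.Adj x a₂) {b : DoubleVert Γ x} (hb : b ∈ p.support) :
    ∃ a, b = .inl a := by
  rcases b with a | a
  · exact ⟨a, rfl⟩
  · rcases p.adj_or_adj_of_length_eq_four hp hb h₁ h₂ (Sum.inl_injective.ne h₁₂)
      Sum.inr_ne_inl Sum.inr_ne_inl with h | h
    · exact (ha₁ (adj_inl_inr.1 h.symm).2).elim
    · exact (ha₂ (adj_inl_inr.1 h.symm).2).elim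

theorem exists_eq_inr_or_adj_of_length_eq_four {d : DoubleVert Γ x}
    (p : (doubleMinusStar Γ x).Walk d d) (hp : p.length = 4)
    {a₁ a₂ : {v : V // ¬(v = x ∨ Γ.Adj x v)}} (h₁ : .inr a₁ ∈ p.support)
    (h₂ : .inr a₂ ∈ p.support) (h₁₂ : a₁ ≠ a₂) {b : DoubleVert Γ x} (hb : b ∈ p.support) :
    (∃ a, b = .inr a) ∨ ∃ a : {v : V // v ≠ x}, Γ.Adj x a ∧ b = .inl a := by
  rcases b with a | a
  · refine .inr ⟨a, ?_, rfl⟩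
    rcases p.adj_or_adj_of_length_eq_four hp hb h₁ h₂ (Sum.inr_injective.ne h₁₂)
      Sum.inl_ne_inr Sum.inl_ne_inr with h | h
    · exact (adj_inl_inr.1 h).2
    · exact (adj_inl_inr.1 h).2
  · exact .inl ⟨a, rfl⟩

end doubleMinusStar

/-- Let `Γ'` be the double of `Γ` along the star of a vertex `x`, with `x`
deleted. If `C` is an induced cycle in `Γ` avoiding the star of `x`, then the image of `C`
in each of the two copies of `Γ` inside `Γ'` is an induced cycle of `Γ'`, and any induced
4-cycle of `Γ'` containing two vertices of such an image lies entirely inside that copy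
(together possibly with vertices of the shared star boundary). -/
theorem double_image_of_induced_cycle
    {V : Type*} (Γ : SimpleGraph V) (x : V) {c : V} (w : Γ.Walk c c)
    (hw : IsInducedCycle Γ w)
    (havoid : ∀ a ∈ w.support, ¬(a = x ∨ Γ.Adj x a)) :
    (∃ (hc : c ≠ x) (w1 : (doubleMinusStar Γ x).Walk (Sum.inl ⟨c, hc⟩) (Sum.inl ⟨c, hc⟩)),
      IsInducedCycle (doubleMinusStar Γ x) w1 ∧
      (∀ b, b ∈ w1.support ↔ ∃ (a : V) (h : a ≠ x), a ∈ w.support ∧ b = Sum.inl ⟨a, h⟩)) ∧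
    (∃ (hc : ¬(c = x ∨ Γ.Adj x c))
        (w2 : (doubleMinusStar Γ x).Walk (Sum.inr ⟨c, hc⟩) (Sum.inr ⟨c, hc⟩)),
      IsInducedCycle (doubleMinusStar Γ x) w2 ∧
      (∀ b, b ∈ w2.support ↔ ∃ (a : V) (h : ¬(a = x ∨ Γ.Adj x a)),
        a ∈ w.support ∧ b = Sum.inr ⟨a, h⟩)) ∧
    (∀ (d : DoubleVert Γ x) (w4 : (doubleMinusStar Γ x).Walk d d),
      IsInducedCycle (doubleMinusStar Γ x) w4 → w4.length = 4 →
      (∃ b1 b2, b1 ∈ w4.support ∧ b2 ∈ w4.support ∧ b1 ≠ b2 ∧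
        (∃ (a1 : V) (h1 : a1 ≠ x), a1 ∈ w.support ∧ b1 = Sum.inl ⟨a1, h1⟩) ∧
        (∃ (a2 : V) (h2 : a2 ≠ x), a2 ∈ w.support ∧ b2 = Sum.inl ⟨a2, h2⟩)) →
      ∀ b ∈ w4.support, ∃ (a : V) (h : a ≠ x), b = Sum.inl ⟨a, h⟩) ∧
    (∀ (d : DoubleVert Γ x) (w4 : (doubleMinusStar Γ x).Walk d d),
      IsInducedCycle (doubleMinusStar Γ x) w4 → w4.length = 4 →
      (∃ b1 b2, b1 ∈ w4.support ∧ b2 ∈ w4.support ∧ b1 ≠ b2 ∧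
        (∃ (a1 : V) (h1 : ¬(a1 = x ∨ Γ.Adj x a1)), a1 ∈ w.support ∧ b1 = Sum.inr ⟨a1, h1⟩) ∧
        (∃ (a2 : V) (h2 : ¬(a2 = x ∨ Γ.Adj x a2)), a2 ∈ w.support ∧ b2 = Sum.inr ⟨a2, h2⟩)) →
      ∀ b ∈ w4.support,
        (∃ (a : V) (h : ¬(a = x ∨ Γ.Adj x a)), b = Sum.inr ⟨a, h⟩) ∨
        (∃ (a : V) (h : a ≠ x), Γ.Adj x a ∧ b = Sum.inl ⟨a, h⟩)) := by
  have h₁ : ∀ a ∈ w.support, a ∈ {v | v ≠ x} := fun a ha h => havoid a ha (.inl h)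
  have hc := havoid c w.start_mem_support
  refine ⟨⟨fun h => hc (.inl h),
      (w.induce _ h₁).map (doubleMinusStar.inlEmbedding Γ x).toHom, ?_,
      fun b => w.mem_support_map_induce _ h₁⟩,
    ⟨hc, (w.induce {v | ¬(v = x ∨ Γ.Adj x v)} havoid).map
      (doubleMinusStar.inrEmbedding Γ x).toHom, ?_,
      fun b => w.mem_support_map_induce _ havoid⟩, ?_, ?_⟩
  · exact hw.induce_map _ h₁
  · exact hw.induce_map _ havoid
  · rintro d w4 - hlen ⟨_, _, hb₁, hb₂, hne, ⟨a₁, _, ha₁, rfl⟩, ⟨a₂, _, ha₂, rfl⟩⟩ b hb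
    obtain ⟨a, rfl⟩ := doubleMinusStar.exists_eq_inl_of_length_eq_four w4 hlen hb₁ hb₂
      (ne_of_apply_ne Sum.inl hne) (fun h => havoid a₁ ha₁ (.inr h))
      (fun h => havoid a₂ ha₂ (.inr h)) hb
    exact ⟨a.1, a.2, rfl⟩
  · rintro d w4 - hlen ⟨_, _, hb₁, hb₂, hne, ⟨a₁, _, -, rfl⟩, ⟨a₂, _, -, rfl⟩⟩ b hb
    rcases doubleMinusStar.exists_eq_inr_or_adj_of_length_eq_four w4 hlen hb₁ hb₂
      (ne_of_apply_ne Sum.inr hne) hb with ⟨a, rfl⟩ | ⟨a, ha, rfl⟩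
    · exact .inl ⟨a.1, a.2, rfl⟩
    · exact .inr ⟨a.1, a.2, ha, rfl⟩
end
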